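/- arXiv:2402.05648 — 6 statements merged into one kernel-verified Lean document; each statement's English description precedes it below -/
import Mathlib

section
/- Let a, b, c ∈ [0, π] with a + b + c = S and sin a + sin b + sin c = T, where 0 < T and a ≤ b ≤ c. If (a, b, c) maximizes sin(a/2) + sin(b/2) + sin(c/2) subject to these constraints, then a = 0 or b = c. -/
/-!
Write the two smaller angles as `m - d ≤ m + d`. Lowering `c` by `2s` and raising the centre `m`
by `s` keeps the angle sum, and the sine sum is restored by choosing the new half-gap `u` with
`2 sin (m + s) cos u = T - sin (c - 2s)`. Along this path the objective equals
`2 sin ((m + s) / 2) √((1 + cos u) / 2) + sin ((c - 2s) / 2)`, which is differentiable in `s`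
even when `d = 0`, with derivative `(α - γ)(β - γ) / (α + β)` at `s = 0`, where `α, β, γ` are the
cosines of the half-angles. This is positive when `b < c`, and for small `s > 0` the path stays
feasible when `0 < a` (`cos u` starts out decreasing, so it stays `≤ 1` even when `a = b`).
-/

open Real Filter Topology Set

theorem HasDerivAt.eventually_nhdsGT_lt {f : ℝ → ℝ} {f' x : ℝ} (hf : HasDerivAt f f' x)
    (hf' : 0 < f') : ∀ᶠ y in 𝓝[>] x, f x < f y := by
  filter_upwards [(hf.tendsto_slope.mono_left (nhdsGT_le_nhdsNE x)).eventually
    (eventually_gt_nhds hf'), self_mem_nhdsWithin] with y hslope hy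
  rw [slope_def_field, div_pos_iff_of_pos_right (sub_pos.2 hy)] at hslope
  linarith

namespace ThreeAngle

variable (m d c : ℝ)

/-- Cosine of the half-gap forced by the sine constraint once `c` moves to `c - 2 * s` and the
centre of the pair to `m + s`. -/
noncomputable def gapCos (s : ℝ) : ℝ :=
  (2 * sin m * cos d + sin c - sin (c - 2 * s)) / (2 * sin (m + s))

noncomputable def gap (s : ℝ) : ℝ := arccos (gapCos m d c s)

/-- The objective along the path, with `cos (gap / 2)` written as a square root so that it stays
differentiable where `gapCos = 1`. -/
noncomputable def halfSineSum (s : ℝ) : ℝ :=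
  2 * sin ((m + s) / 2) * √((1 + gapCos m d c s) / 2) + sin ((c - 2 * s) / 2)

variable {m d c}

lemma gapCos_zero (hm : sin m ≠ 0) : gapCos m d c 0 = cos d := by
  simp only [gapCos, mul_zero, sub_zero, add_zero]
  field_simp
  ring

lemma hasDerivAt_gapCos (hm : sin m ≠ 0) :
    HasDerivAt (gapCos m d c) ((cos c - cos d * cos m) / sin m) 0 := by
  have hnum : HasDerivAt (fun s => 2 * sin m * cos d + sin c - sin (c - 2 * s))
      (-(cos (c - 2 * 0) * -(2 * 1))) 0 :=
    (((hasDerivAt_id (0 : ℝ)).const_mul 2).const_sub c).sin.const_sub _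
  have hden : HasDerivAt (fun s => 2 * sin (m + s)) (2 * (cos (m + 0) * 1)) 0 :=
    ((hasDerivAt_id (0 : ℝ)).const_add m).sin.const_mul 2
  refine (hnum.div hden (by simpa using hm)).congr_deriv ?_
  simp only [mul_zero, sub_zero, add_zero, mul_one]
  field_simp
  ring

lemma gap_zero (hm : sin m ≠ 0) (hd : 0 ≤ d) (hdπ : d ≤ π) : gap m d c 0 = d := by
  rw [gap, gapCos_zero hm, arccos_cos hd hdπ]

lemma sin_sum_perturb {s : ℝ} (hρ : gapCos m d c s ∈ Icc (-1) 1) (hs : sin (m + s) ≠ 0) :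
    sin (m + s - gap m d c s) + sin (m + s + gap m d c s) + sin (c - 2 * s) =
      sin (m - d) + sin (m + d) + sin c := by
  have hcos : cos (gap m d c s) = gapCos m d c s := cos_arccos hρ.1 hρ.2
  have hpair :
      2 * sin (m + s) * gapCos m d c s = 2 * sin m * cos d + sin c - sin (c - 2 * s) := by
    unfold gapCos; field_simp
  rw [sin_sub (m + s), sin_add (m + s) (gap m d c s), hcos, sin_sub m d, sin_add m d]
  linear_combination hpair

lemma sin_half_sum_perturb {s : ℝ} (hρ : gapCos m d c s ∈ Icc (-1) 1) :
    sin ((m + s - gap m d c s) / 2) + sin ((m + s + gap m d c s) / 2) + sin ((c - 2 * s) / 2) =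
      halfSineSum m d c s := by
  have hhalf : cos (gap m d c s / 2) = √((1 + gapCos m d c s) / 2) := by
    rw [cos_half (x := gap m d c s) ((neg_nonpos.2 pi_pos.le).trans (arccos_nonneg _))
      (arccos_le_pi _), gap, cos_arccos hρ.1 hρ.2]
  rw [halfSineSum, ← hhalf, sub_div, add_div (m + s), sin_sub, sin_add]
  ring

lemma hasDerivAt_halfSineSum (hm : sin m ≠ 0) (hd₁ : -π < d) (hd₂ : d < π) :
    HasDerivAt (halfSineSum m d c)
      ((cos ((m - d) / 2) - cos (c / 2)) * (cos ((m + d) / 2) - cos (c / 2)) /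
        (cos ((m - d) / 2) + cos ((m + d) / 2))) 0 := by
  have hm2 : sin m = 2 * sin (m / 2) * cos (m / 2) := by rw [← sin_two_mul]; ring_nf
  have hcm : cos m = 2 * cos (m / 2) ^ 2 - 1 := by rw [← cos_two_mul]; ring_nf
  have hcd : cos d = 2 * cos (d / 2) ^ 2 - 1 := by rw [← cos_two_mul]; ring_nf
  have hcc : cos c = 2 * cos (c / 2) ^ 2 - 1 := by rw [← cos_two_mul]; ring_nf
  have hcm0 : cos (m / 2) ≠ 0 := fun h => hm (by rw [hm2, h, mul_zero])
  have hsm0 : sin (m / 2) ≠ 0 := fun h => hm (by rw [hm2, h, mul_zero, zero_mul])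
  have hcd0 : 0 < cos (d / 2) := cos_pos_of_mem_Ioo ⟨by linarith, by linarith⟩
  have hroot : √((1 + gapCos m d c 0) / 2) = cos (d / 2) := by
    rw [gapCos_zero hm, cos_half hd₁.le hd₂.le]
  have hsqrt := (((hasDerivAt_gapCos (c := c) hm).const_add 1).div_const 2).sqrt
    (by rw [gapCos_zero hm, hcd, show (1 + (2 * cos (d / 2) ^ 2 - 1)) / 2 = cos (d / 2) ^ 2 by ring]
        exact pow_ne_zero 2 hcd0.ne')
  have hsin := (((hasDerivAt_id (0 : ℝ)).const_add m).div_const 2).sin.const_mul 2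
  have hlast := ((((hasDerivAt_id (0 : ℝ)).const_mul 2).const_sub c).div_const 2).sin
  refine ((hsin.mul hsqrt).add hlast).congr_deriv ?_
  simp only [id, add_zero, mul_zero, sub_zero, hroot]
  rw [sub_div m d 2, add_div m d 2, cos_sub, cos_add, hm2, hcm, hcd, hcc]
  field_simp
  linear_combination
    (4 * cos (m / 2) * cos (d / 2) * sin (d / 2) ^ 2) * sin_sq_add_cos_sq (m / 2) +
      (4 * cos (m / 2) * cos (d / 2) * (1 - cos (m / 2) ^ 2)) * sin_sq_add_cos_sq (d / 2)

lemma gapCos_deriv_neg (hd : 0 ≤ d) (hdm : d < m) (hdc : m + d < c) (hc : c ≤ π) :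
    (cos c - cos d * cos m) / sin m < 0 := by
  have hm : 0 < sin m := sin_pos_of_pos_of_lt_pi (by linarith) (by linarith)
  have hsd : 0 ≤ sin d := sin_nonneg_of_nonneg_of_le_pi hd (by linarith)
  have hcos : cos c < cos (m + d) :=
    strictAntiOn_cos ⟨by linarith, by linarith⟩ ⟨by linarith, hc⟩ hdc
  rw [cos_add] at hcos
  exact div_neg_of_neg_of_pos (by nlinarith [mul_nonneg hm.le hsd]) hm

lemma eventually_gapCos_mem_Icc (hd : 0 ≤ d) (hdm : d < m) (hdc : m + d < c) (hc : c ≤ π) :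
    ∀ᶠ s in 𝓝[>] 0, gapCos m d c s ∈ Icc (-1) 1 := by
  have hm : sin m ≠ 0 := (sin_pos_of_pos_of_lt_pi (by linarith) (by linarith)).ne'
  have hderiv := hasDerivAt_gapCos (d := d) (c := c) hm
  have hcd : 0 < cos d := cos_pos_of_mem_Ioo ⟨by linarith, by linarith⟩
  have hlow : ∀ᶠ s in 𝓝 0, -1 < gapCos m d c s :=
    hderiv.continuousAt.eventually (lt_mem_nhds (by rw [gapCos_zero hm]; linarith))
  have hup : ∀ᶠ s in 𝓝[>] 0, -gapCos m d c 0 < -gapCos m d c s :=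
    hderiv.neg.eventually_nhdsGT_lt (neg_pos.2 (gapCos_deriv_neg hd hdm hdc hc))
  filter_upwards [hlow.filter_mono nhdsWithin_le_nhds, hup] with s hs₁ hs₂
  rw [gapCos_zero hm] at hs₂
  exact ⟨hs₁.le, by linarith [cos_le_one d]⟩

lemma tendsto_gap (hm : sin m ≠ 0) (hd : 0 ≤ d) (hdπ : d ≤ π) :
    Tendsto (gap m d c) (𝓝 0) (𝓝 d) := by
  have :=
    (continuous_arccos.tendsto _).comp (hasDerivAt_gapCos (d := d) (c := c) hm).continuousAt
  rwa [gapCos_zero hm, arccos_cos hd hdπ] at this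

theorem exists_better_triple (hd : 0 ≤ d) (hdm : d < m) (hdc : m + d < c) (hc : c ≤ π) :
    ∃ a' b' c', a' ∈ Icc 0 π ∧ b' ∈ Icc 0 π ∧ c' ∈ Icc 0 π ∧
      a' + b' + c' = (m - d) + (m + d) + c ∧
      sin a' + sin b' + sin c' = sin (m - d) + sin (m + d) + sin c ∧
      sin ((m - d) / 2) + sin ((m + d) / 2) + sin (c / 2) <
        sin (a' / 2) + sin (b' / 2) + sin (c' / 2) := by
  have hm : sin m ≠ 0 := (sin_pos_of_pos_of_lt_pi (by linarith) (by linarith)).ne'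
  have hgap := tendsto_gap (c := c) hm hd (by linarith)
  have hshift : Tendsto (fun s : ℝ => m + s) (𝓝 0) (𝓝 m) := by
    simpa using (tendsto_id (x := 𝓝 (0 : ℝ))).const_add m
  have hsin : ∀ᶠ s in 𝓝 (0 : ℝ), sin (m + s) ≠ 0 :=
    (continuous_sin.tendsto m).comp hshift |>.eventually_ne hm
  have hlow : ∀ᶠ s in 𝓝 (0 : ℝ), m + s - gap m d c s ∈ Icc 0 π :=
    (hshift.sub hgap).eventually (Icc_mem_nhds (by linarith) (by linarith))
  have hhigh : ∀ᶠ s in 𝓝 (0 : ℝ), m + s + gap m d c s ∈ Icc 0 π :=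
    (hshift.add hgap).eventually (Icc_mem_nhds (by linarith) (by linarith))
  have hlast : ∀ᶠ s in 𝓝 (0 : ℝ), 0 ≤ c - 2 * s :=
    (tendsto_const_nhds.sub (tendsto_id.const_mul 2)).eventually
      (eventually_ge_nhds (by simp; linarith))
  have hγα : cos (c / 2) < cos ((m - d) / 2) :=
    cos_lt_cos_of_nonneg_of_le_pi (by linarith) (by linarith) (by linarith)
  have hγβ : cos (c / 2) < cos ((m + d) / 2) :=
    cos_lt_cos_of_nonneg_of_le_pi (by linarith) (by linarith) (by linarith)
  have hγ : 0 ≤ cos (c / 2) := cos_nonneg_of_mem_Icc ⟨by linarith, by linarith⟩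
  have hgain :=
    (hasDerivAt_halfSineSum (c := c) hm (by linarith) (by linarith)).eventually_nhdsGT_lt <|
      div_pos (mul_pos (sub_pos.2 hγα) (sub_pos.2 hγβ)) (by linarith)
  obtain ⟨s, hρ, hgain, ⟨hsin, hlow, hhigh, hlast⟩, (hs : 0 < s)⟩ :=
    ((eventually_gapCos_mem_Icc hd hdm hdc hc).and <| hgain.and <|
      ((hsin.and <| hlow.and <| hhigh.and hlast).filter_mono nhdsWithin_le_nhds).and
        self_mem_nhdsWithin).exists
  have hbase := sin_half_sum_perturb (m := m) (d := d) (c := c) (s := 0)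
    (by rw [gapCos_zero hm]; exact ⟨neg_one_le_cos d, cos_le_one d⟩)
  rw [gap_zero hm hd (by linarith), add_zero, mul_zero, sub_zero] at hbase
  refine ⟨m + s - gap m d c s, m + s + gap m d c s, c - 2 * s, hlow, hhigh,
    ⟨hlast, by linarith⟩, by ring, sin_sum_perturb hρ hsin, ?_⟩
  rwa [sin_half_sum_perturb hρ, hbase]

end ThreeAngle

theorem three_angle_maximizer_general (S T a b c : ℝ)
    (ha : a ∈ Set.Icc 0 π) (hc : c ∈ Set.Icc 0 π)
    (hab : a ≤ b) (hbc : b ≤ c)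
    (hsum : a + b + c = S)
    (hsin : Real.sin a + Real.sin b + Real.sin c = T)
    (hmax : ∀ a' b' c' : ℝ, a' ∈ Set.Icc 0 π → b' ∈ Set.Icc 0 π → c' ∈ Set.Icc 0 π →
      a' + b' + c' = S → Real.sin a' + Real.sin b' + Real.sin c' = T →
      Real.sin (a' / 2) + Real.sin (b' / 2) + Real.sin (c' / 2) ≤
        Real.sin (a / 2) + Real.sin (b / 2) + Real.sin (c / 2)) :
    a = 0 ∨ b = c := by
  by_contra! h
  have ha₀ : 0 < a := lt_of_le_of_ne ha.1 (Ne.symm h.1)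
  have hbc' : b < c := lt_of_le_of_ne hbc h.2
  obtain ⟨a', b', c', ha', hb', hc', hsum', hsin', hgain⟩ :=
    ThreeAngle.exists_better_triple (m := (a + b) / 2) (d := (b - a) / 2)
      (by linarith) (by linarith) (by linarith) hc.2
  rw [show (a + b) / 2 - (b - a) / 2 = a by ring, show (a + b) / 2 + (b - a) / 2 = b by ring]
    at hsum' hsin' hgain
  exact (hmax a' b' c' ha' hb' hc' (hsum'.trans hsum) (hsin'.trans hsin)).not_gt hgain

theorem three_angle_maximizer (S T a b c : ℝ)
    (hT : 0 < T)
    (ha : a ∈ Set.Icc 0 π) (hb : b ∈ Set.Icc 0 π) (hc : c ∈ Set.Icc 0 π)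
    (hab : a ≤ b) (hbc : b ≤ c)
    (hsum : a + b + c = S)
    (hsin : Real.sin a + Real.sin b + Real.sin c = T)
    (hmax : ∀ a' b' c' : ℝ, a' ∈ Set.Icc 0 π → b' ∈ Set.Icc 0 π → c' ∈ Set.Icc 0 π →
      a' + b' + c' = S → Real.sin a' + Real.sin b' + Real.sin c' = T →
      Real.sin (a' / 2) + Real.sin (b' / 2) + Real.sin (c' / 2) ≤
        Real.sin (a / 2) + Real.sin (b / 2) + Real.sin (c / 2)) :
    a = 0 ∨ b = c :=
  three_angle_maximizer_general S T a b c ha hc hab hbc hsum hsin hmax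
end

section
/- Let f, g : [0, M] → ℝ be C² with f' and g' injective, g'' nonvanishing, and f''/g'' injective on [0, M]. Let S, T be such that X = {(a,b,c) ∈ [0,M]³ : a+b+c = S, g(a)+g(b)+g(c) = T} is nonempty. If (a, b, c) ∈ X minimizes f(a) + f(b) + f(c) over X and a, b, c ∈ (0, M), then at least two of a, b, c are equal. -/
open Real Set

/-! At an interior minimiser with pairwise distinct coordinates, Lagrange multipliers give
`f' = α + β g'` at `a`, `b` and `c`; the multiplier of the objective is nonzero because
`g'(a) ≠ g'(b)`. Rolle's theorem for `f' - β g'` between each pair of the three points yields points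
where `f'' / g'' = β`; by injectivity they all coincide, yet no point lies strictly between every
pair of three distinct reals. -/

theorem uIoo_inter_uIoo_inter_uIoo_eq_empty {α : Type*} [LinearOrder α] (a b c : α) :
    uIoo a b ∩ uIoo b c ∩ uIoo a c = ∅ := by
  ext z
  simp only [uIoo, mem_inter_iff, mem_Ioo, mem_empty_iff_false, iff_false]
  rcases le_total a b with hab | hab <;> rcases le_total b c with hbc | hbc <;>
    rcases le_total a c with hac | hac <;> simp [*] <;> intros <;> order

theorem IsMinOn.isLocalMinOn_of_inter_mem_nhds {X β : Type*} [TopologicalSpace X] [Preorder β]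
    {φ : X → β} {s K : Set X} {x : X} (h : IsMinOn φ (s ∩ K) x) (hK : K ∈ nhds x) :
    IsLocalMinOn φ s x := by
  rw [IsLocalMinOn, ← nhdsWithin_inter_of_mem' (mem_nhdsWithin_of_mem_nhds hK)]
  exact h.localize

theorem hasDerivAt_deriv_of_contDiffOn_two {f : ℝ → ℝ} {U : Set ℝ} (hU : IsOpen U)
    (hf : ContDiffOn ℝ 2 f U) {x : ℝ} (hx : x ∈ U) :
    HasDerivAt (deriv f) (iteratedDeriv 2 f x) x := by
  rw [iteratedDeriv_succ, iteratedDeriv_one]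
  exact (((hf.deriv_of_isOpen hU (by norm_num) : ContDiffOn ℝ 1 (deriv f) U).differentiableOn
    one_ne_zero x hx).differentiableAt (hU.mem_nhds hx)).hasDerivAt

theorem hasStrictFDerivAt_sum_comp_apply {ι : Type*} [Fintype ι] {h h' : ℝ → ℝ} {p : ι → ℝ}
    (hh : ∀ i, HasStrictDerivAt h (h' (p i)) (p i)) :
    HasStrictFDerivAt (fun q : ι → ℝ ↦ ∑ i, h (q i))
      (∑ i, h' (p i) • (ContinuousLinearMap.proj i : (ι → ℝ) →L[ℝ] ℝ)) p :=
  HasStrictFDerivAt.fun_sum fun i _ ↦ (hh i).comp_hasStrictFDerivAt p (hasStrictFDerivAt_apply i p)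

theorem exists_deriv_eq_add_mul_of_isLocalMinOn_sum {ι : Type*} [Fintype ι]
    {f g f' g' : ℝ → ℝ} {p : ι → ℝ}
    (hf : ∀ i, HasStrictDerivAt f (f' (p i)) (p i)) (hg : ∀ i, HasStrictDerivAt g (g' (p i)) (p i))
    {j k : ι} (hjk : g' (p j) ≠ g' (p k))
    (hmin : IsLocalMinOn (fun q : ι → ℝ ↦ ∑ i, f (q i))
      {q | ∑ i, q i = ∑ i, p i ∧ ∑ i, g (q i) = ∑ i, g (p i)} p) :
    ∃ α β : ℝ, ∀ i, f' (p i) = α + β * g' (p i) := by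
  classical
  let constraint : Fin 2 → (ι → ℝ) → ℝ := ![fun q ↦ ∑ i, id (q i), fun q ↦ ∑ i, g (q i)]
  let constraint' : Fin 2 → (ι → ℝ) →L[ℝ] ℝ :=
    ![∑ i, (1 : ℝ) • ContinuousLinearMap.proj i, ∑ i, g' (p i) • ContinuousLinearMap.proj i]
  have hconstraint : ∀ n, HasStrictFDerivAt (constraint n) (constraint' n) p :=
    Fin.forall_fin_two.2 ⟨hasStrictFDerivAt_sum_comp_apply (h' := fun _ ↦ 1)
      fun i ↦ hasStrictDerivAt_id (p i), hasStrictFDerivAt_sum_comp_apply hg⟩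
  have hset : {q | ∀ n, constraint n q = constraint n p} =
      {q | ∑ i, q i = ∑ i, p i ∧ ∑ i, g (q i) = ∑ i, g (p i)} := by
    ext; simp [constraint, Fin.forall_fin_two]
  have hextr : IsLocalExtrOn (fun q : ι → ℝ ↦ ∑ i, f (q i))
      {q | ∀ n, constraint n q = constraint n p} p := hset ▸ hmin.isExtr
  obtain ⟨Λ, Λ₀, hΛ, hsum⟩ := hextr.exists_multipliers_of_hasStrictFDerivAt hconstraint
    (hasStrictFDerivAt_sum_comp_apply hf)
  have hcoord (i : ι) : Λ 0 + Λ 1 * g' (p i) + Λ₀ * f' (p i) = 0 := by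
    simpa [constraint', Fin.sum_univ_two, Pi.single_apply] using
      DFunLike.congr_fun hsum (Pi.single i 1)
  have hΛ₀ : Λ₀ ≠ 0 := by
    rintro rfl
    have h1 : Λ 1 = 0 := by
      have hj := hcoord j
      have hk := hcoord k
      exact (mul_left_inj' (sub_ne_zero.2 hjk)).1 (by linear_combination hj - hk)
    have h0 : Λ 0 = 0 := by simpa [h1] using hcoord j
    exact hΛ (Prod.ext (funext (Fin.forall_fin_two.2 ⟨h0, h1⟩)) rfl)
  exact ⟨-Λ 0 / Λ₀, -Λ 1 / Λ₀, fun i ↦ by field_simp; linear_combination hcoord i⟩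

theorem exists_mem_uIoo_iteratedDeriv_two_div_eq {f g : ℝ → ℝ} {U : Set ℝ} (hU : IsOpen U)
    (hf : ContDiffOn ℝ 2 f U) (hg : ContDiffOn ℝ 2 g U) (hg₂ : ∀ z ∈ U, iteratedDeriv 2 g z ≠ 0)
    {x y : ℝ} (hxy : x ≠ y) (hxyU : uIcc x y ⊆ U) {α β : ℝ}
    (hx : deriv f x = α + β * deriv g x) (hy : deriv f y = α + β * deriv g y) :
    ∃ z ∈ uIoo x y, iteratedDeriv 2 f z / iteratedDeriv 2 g z = β := by
  have hderiv (t : ℝ) (ht : t ∈ U) : HasDerivAt (fun s ↦ deriv f s - β * deriv g s)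
      (iteratedDeriv 2 f t - β * iteratedDeriv 2 g t) t :=
    (hasDerivAt_deriv_of_contDiffOn_two hU hf ht).sub
      ((hasDerivAt_deriv_of_contDiffOn_two hU hg ht).const_mul β)
  obtain ⟨z, hz, hextr⟩ := exists_isLocalExtr_uIoo hxy
    (fun t ht ↦ (hderiv t (hxyU ht)).continuousAt.continuousWithinAt) (by rw [hx, hy]; ring)
  have hzU : z ∈ U := hxyU (uIoo_subset_uIcc_self hz)
  refine ⟨z, hz, ?_⟩
  rw [div_eq_iff (hg₂ z hzU), ← sub_eq_zero]
  exact hextr.hasDerivAt_eq_zero (hderiv z hzU)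

theorem eq_or_eq_or_eq_of_deriv_eq_add_mul {f g : ℝ → ℝ} {U : Set ℝ} (hU : IsOpen U)
    (hUc : U.OrdConnected) (hf : ContDiffOn ℝ 2 f U) (hg : ContDiffOn ℝ 2 g U)
    (hg₂ : ∀ z ∈ U, iteratedDeriv 2 g z ≠ 0)
    (hfg : InjOn (fun x ↦ iteratedDeriv 2 f x / iteratedDeriv 2 g x) U)
    {a b c α β : ℝ} (ha : a ∈ U) (hb : b ∈ U) (hc : c ∈ U)
    (hfa : deriv f a = α + β * deriv g a) (hfb : deriv f b = α + β * deriv g b)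
    (hfc : deriv f c = α + β * deriv g c) :
    a = b ∨ b = c ∨ a = c := by
  by_contra! hne
  obtain ⟨hab, hbc, hac⟩ := hne
  have hmem {x y z : ℝ} (hx : x ∈ U) (hy : y ∈ U) (hz : z ∈ uIoo x y) : z ∈ U :=
    hUc.uIcc_subset hx hy (uIoo_subset_uIcc_self hz)
  obtain ⟨z₁, hz₁, hr₁⟩ := exists_mem_uIoo_iteratedDeriv_two_div_eq hU hf hg hg₂ hab
    (hUc.uIcc_subset ha hb) hfa hfb
  obtain ⟨z₂, hz₂, hr₂⟩ := exists_mem_uIoo_iteratedDeriv_two_div_eq hU hf hg hg₂ hbc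
    (hUc.uIcc_subset hb hc) hfb hfc
  obtain ⟨z₃, hz₃, hr₃⟩ := exists_mem_uIoo_iteratedDeriv_two_div_eq hU hf hg hg₂ hac
    (hUc.uIcc_subset ha hc) hfa hfc
  obtain rfl : z₂ = z₁ := hfg (hmem hb hc hz₂) (hmem ha hb hz₁) (hr₂.trans hr₁.symm)
  obtain rfl : z₃ = z₂ := hfg (hmem ha hc hz₃) (hmem hb hc hz₂) (hr₃.trans hr₂.symm)
  exact (uIoo_inter_uIoo_inter_uIoo_eq_empty a b c).subset ⟨⟨hz₁, hz₂⟩, hz₃⟩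

theorem general_constrained_min_general (M S T : ℝ) (f g : ℝ → ℝ)
    (hf : ContDiffOn ℝ 2 f (Icc 0 M)) (hg : ContDiffOn ℝ 2 g (Icc 0 M))
    (hg' : InjOn (deriv g) (Icc 0 M))
    (hg'' : ∀ x ∈ Icc 0 M, iteratedDeriv 2 g x ≠ 0)
    (hfg : InjOn (fun x => iteratedDeriv 2 f x / iteratedDeriv 2 g x) (Icc 0 M))
    (a b c : ℝ) (ha : a ∈ Ioo 0 M) (hb : b ∈ Ioo 0 M) (hc : c ∈ Ioo 0 M)
    (hsum : a + b + c = S) (hcon : g a + g b + g c = T)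
    (hmin : ∀ a' b' c' : ℝ, a' ∈ Icc 0 M → b' ∈ Icc 0 M → c' ∈ Icc 0 M →
      a' + b' + c' = S → g a' + g b' + g c' = T →
      f a + f b + f c ≤ f a' + f b' + f c') :
    a = b ∨ b = c ∨ a = c := by
  refine or_iff_not_imp_left.2 fun hab ↦ ?_
  let p : Fin 3 → ℝ := ![a, b, c]
  have hp (i : Fin 3) : p i ∈ Ioo 0 M := by fin_cases i <;> assumption
  have hstrict {h : ℝ → ℝ} (hh : ContDiffOn ℝ 2 h (Icc 0 M)) (i : Fin 3) :
      HasStrictDerivAt h (deriv h (p i)) (p i) :=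
    ((hh.mono Ioo_subset_Icc_self).contDiffAt (isOpen_Ioo.mem_nhds (hp i))).hasStrictDerivAt
      two_ne_zero
  have hglobal : IsMinOn (fun q : Fin 3 → ℝ ↦ ∑ i, f (q i))
      ({q | ∑ i, q i = ∑ i, p i ∧ ∑ i, g (q i) = ∑ i, g (p i)} ∩ univ.pi fun _ ↦ Icc 0 M) p := by
    rintro q ⟨⟨hq₁, hq₂⟩, hqM⟩
    simp only [Fin.sum_univ_three, p, Matrix.cons_val] at hq₁ hq₂ ⊢
    exact hmin _ _ _ (hqM 0 trivial) (hqM 1 trivial) (hqM 2 trivial) (hq₁.trans hsum)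
      (hq₂.trans hcon)
  obtain ⟨α, β, hαβ⟩ := exists_deriv_eq_add_mul_of_isLocalMinOn_sum (hstrict hf) (hstrict hg)
    (j := 0) (k := 1) (fun h ↦ hab (hg' (Ioo_subset_Icc_self ha) (Ioo_subset_Icc_self hb) h))
    (hglobal.isLocalMinOn_of_inter_mem_nhds
      (set_pi_mem_nhds finite_univ fun i _ ↦ Icc_mem_nhds (hp i).1 (hp i).2))
  exact (eq_or_eq_or_eq_of_deriv_eq_add_mul isOpen_Ioo ordConnected_Ioo
    (hf.mono Ioo_subset_Icc_self) (hg.mono Ioo_subset_Icc_self)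
    (fun z hz ↦ hg'' z (Ioo_subset_Icc_self hz)) (hfg.mono Ioo_subset_Icc_self) ha hb hc
    (hαβ 0) (hαβ 1) (hαβ 2)).resolve_left hab

theorem general_constrained_min (M S T : ℝ) (hM : 0 < M) (f g : ℝ → ℝ)
    (hf : ContDiffOn ℝ 2 f (Icc 0 M)) (hg : ContDiffOn ℝ 2 g (Icc 0 M))
    (hf' : InjOn (deriv f) (Icc 0 M)) (hg' : InjOn (deriv g) (Icc 0 M))
    (hg'' : ∀ x ∈ Icc 0 M, iteratedDeriv 2 g x ≠ 0)
    (hfg : InjOn (fun x => iteratedDeriv 2 f x / iteratedDeriv 2 g x) (Icc 0 M))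
    (a b c : ℝ) (ha : a ∈ Ioo 0 M) (hb : b ∈ Ioo 0 M) (hc : c ∈ Ioo 0 M)
    (hsum : a + b + c = S) (hcon : g a + g b + g c = T)
    (hmin : ∀ a' b' c' : ℝ, a' ∈ Icc 0 M → b' ∈ Icc 0 M → c' ∈ Icc 0 M →
      a' + b' + c' = S → g a' + g b' + g c' = T →
      f a + f b + f c ≤ f a' + f b' + f c') :
    a = b ∨ b = c ∨ a = c :=
  general_constrained_min_general M S T f g hf hg hg' hg'' hfg a b c ha hb hc hsum hcon hmin
end

section
/- Let n ≥ 3, S ∈ (0, 2π], and T ∈ (0, n sin(S/n)]. If (θ₁, ..., θₙ) with 0 ≤ θ₁ ≤ ⋯ ≤ θₙ ≤ π, ∑θᵢ = S, and ∑ sin θᵢ = T maximizes ∑ sin(θᵢ/2) over this constraint set, then either θ₁ = 0 or θ₂ = θ₃ = ⋯ = θₙ. -/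
/-!
Suppose `θ₁ > 0` and `θᵢ < θⱼ` for some `i, j ≥ 2`, and put `a = θ₁ ≤ b = θᵢ < c = θⱼ`.
Lower `c` to `w` and replace `(a, b)` by the pair `m ∓ δ` with `2m = a + b + c - w`, the
half-gap `δ` being chosen so that `∑ sin` is unchanged. Along this curve the objective
`∑ sin (θ / 2)` has derivative
`-(cos (a/2) - cos (c/2)) (cos (b/2) - cos (c/2)) / (2 (cos (a/2) + cos (b/2))) < 0` at `w = c`,
so lowering `c` slightly gives a strictly better point of the constraint set, once the
perturbed angles are sorted again.
-/

open Real Filter Topology Function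

theorem HasDerivAt.eventually_nhdsLT_lt_of_neg {f : ℝ → ℝ} {f' c : ℝ} (hf : HasDerivAt f f' c)
    (hf' : f' < 0) : ∀ᶠ w in 𝓝[<] c, f c < f w := by
  have hslope : ∀ᶠ w in 𝓝[<] c, slope f c w < 0 :=
    (hasDerivAt_iff_tendsto_slope.1 hf).eventually (gt_mem_nhds hf')
      |>.filter_mono (nhdsWithin_mono _ fun _ hw => ne_of_lt hw)
  filter_upwards [hslope, self_mem_nhdsWithin] with w hw (hwc : w < c)
  rw [slope_def_field, div_neg_iff] at hw
  rcases hw with ⟨h, -⟩ | ⟨-, h⟩ <;> linarith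

theorem sum_apply_update {ι M α : Type*} [Fintype ι] [DecidableEq ι] [AddCommGroup M]
    (F : α → M) (g : ι → α) (p : ι) (v : α) :
    ∑ i, F (update g p v i) = ∑ i, F (g i) + (F v - F (g p)) := by
  simp_rw [apply_update (fun _ => F), Finset.sum_update_of_mem (Finset.mem_univ p),
    ← Finset.add_sum_erase _ _ (Finset.mem_univ p), Finset.sdiff_singleton_eq_erase]
  abel

/-- Replacing `c` by `w` and `(a, b)` by `m ∓ δ` with `2m = a + b + c - w` preserves the sum of
the sines when `cos δ = halfGapCos a b c w`. -/
noncomputable def halfGapCos (a b c w : ℝ) : ℝ :=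
  (sin a + sin b + sin c - sin w) / (2 * sin ((a + b + c - w) / 2))

/-- The value of `∑ sin (θ / 2)` at the triple `(m - δ, m + δ, w)` above, written through
`cos (δ / 2) = √((1 + cos δ) / 2)` to avoid `arccos`, which is not differentiable at
`halfGapCos a a c c = 1`. -/
noncomputable def curveObjective (a b c w : ℝ) : ℝ :=
  sin (w / 2) + 2 * sin ((a + b + c - w) / 4) * √((1 + halfGapCos a b c w) / 2)

section Curve

variable {a b c : ℝ}

theorem halfGapCos_self (h₀ : 0 < a + b) (hπ : a + b < 2 * π) :
    halfGapCos a b c c = cos ((a - b) / 2) := by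
  have : sin ((a + b) / 2) ≠ 0 := (sin_pos_of_pos_of_lt_pi (by linarith) (by linarith)).ne'
  rw [halfGapCos, add_sub_cancel_right, add_sub_cancel_right, sin_add_sin]
  field_simp

theorem hasDerivAt_halfGapCos (h₀ : 0 < a + b) (hπ : a + b < 2 * π) :
    HasDerivAt (halfGapCos a b c) ((cos a + cos b - 2 * cos c) / (4 * sin ((a + b) / 2))) c := by
  have hs : sin ((a + b) / 2) ≠ 0 := (sin_pos_of_pos_of_lt_pi (by linarith) (by linarith)).ne'
  have hnum : HasDerivAt (fun w => sin a + sin b + sin c - sin w) (-cos c) c :=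
    (hasDerivAt_sin c).const_sub _
  have hden : HasDerivAt (fun w => 2 * sin ((a + b + c - w) / 2)) (-cos ((a + b) / 2)) c :=
    ((((hasDerivAt_id' c).const_sub (a + b + c)).div_const 2).sin.const_mul 2).congr_deriv
      (by rw [add_sub_cancel_right]; ring)
  refine (hnum.div hden (by simpa using hs)).congr_deriv ?_
  rw [add_sub_cancel_right, add_sub_cancel_right, sin_add_sin]
  field_simp
  linear_combination (-2) * cos_add_cos a b

theorem sqrt_one_add_halfGapCos_self (ha : 0 < a) (hab : a ≤ b) (hb : b < π) :
    √((1 + halfGapCos a b c c) / 2) = cos ((a - b) / 4) := by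
  rw [halfGapCos_self (by linarith) (by linarith), ← cos_half (by linarith) (by linarith)]
  ring_nf

theorem curveObjective_self (ha : 0 < a) (hab : a ≤ b) (hb : b < π) :
    curveObjective a b c c = sin (a / 2) + sin (b / 2) + sin (c / 2) := by
  rw [curveObjective, sqrt_one_add_halfGapCos_self ha hab hb, sin_add_sin (a / 2)]
  ring_nf

theorem hasDerivAt_curveObjective (ha : 0 < a) (hab : a ≤ b) (hb : b < π) :
    HasDerivAt (curveObjective a b c)
      (-((cos (a / 2) - cos (c / 2)) * (cos (b / 2) - cos (c / 2))) /
        (2 * (cos (a / 2) + cos (b / 2)))) c := by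
  have hg := hasDerivAt_halfGapCos (a := a) (b := b) (c := c) (by linarith) (by linarith)
  have hsqrt := sqrt_one_add_halfGapCos_self (c := c) ha hab hb
  set u := (a + b) / 4 with hu
  set v := (a - b) / 4 with hv
  have hcu : 0 < cos u := cos_pos_of_mem_Ioo ⟨by linarith, by linarith⟩
  have hsu : 0 < sin u := sin_pos_of_pos_of_lt_pi (by linarith) (by linarith)
  have hcv : 0 < cos v := cos_pos_of_mem_Ioo ⟨by linarith, by linarith⟩
  have h₁ : HasDerivAt (fun w => sin (w / 2)) (cos (c / 2) / 2) c :=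
    ((hasDerivAt_id' c).div_const 2).sin.congr_deriv (by ring)
  have h₂ : HasDerivAt (fun w => 2 * sin ((a + b + c - w) / 4)) (-cos u / 2) c :=
    ((((hasDerivAt_id' c).const_sub (a + b + c)).div_const 4).sin.const_mul 2).congr_deriv
      (by rw [add_sub_cancel_right]; ring)
  have h₃ := ((hg.const_add 1).div_const 2).sqrt (Real.sqrt_pos.1 (hsqrt ▸ hcv)).ne'
  refine (h₁.add (h₂.mul h₃)).congr_deriv ?_
  have hA : cos (a / 2) = cos u * cos v - sin u * sin v := by rw [← cos_add, hu, hv]; ring_nf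
  have hB : cos (b / 2) = cos u * cos v + sin u * sin v := by rw [← cos_sub, hu, hv]; ring_nf
  have hS : sin ((a + b) / 2) = 2 * sin u * cos u := by rw [← sin_two_mul, hu]; ring_nf
  have hdouble (x : ℝ) : cos x = 2 * cos (x / 2) ^ 2 - 1 := by rw [← cos_two_mul]; ring_nf
  rw [hsqrt, add_sub_cancel_right, hS, hdouble a, hdouble b, hdouble c, hA, hB]
  field_simp
  ring

theorem eventually_curveObjective_gt (ha : 0 < a) (hab : a ≤ b) (hbc : b < c) (hc : c ≤ π) :
    ∀ᶠ w in 𝓝[<] c, curveObjective a b c c < curveObjective a b c w := by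
  have hb : b < π := hbc.trans_le hc
  have hcb : cos (c / 2) < cos (b / 2) :=
    cos_lt_cos_of_nonneg_of_le_pi (by linarith) (by linarith) (by linarith)
  have hba : cos (b / 2) ≤ cos (a / 2) :=
    cos_le_cos_of_nonneg_of_le_pi (by linarith) (by linarith) (by linarith)
  have hc₀ : 0 ≤ cos (c / 2) := cos_nonneg_of_mem_Icc ⟨by linarith, by linarith⟩
  refine (hasDerivAt_curveObjective ha hab hb).eventually_nhdsLT_lt_of_neg ?_
  refine div_neg_of_neg_of_pos (neg_neg_of_pos (mul_pos ?_ ?_)) ?_ <;> linarith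

theorem eventually_halfGapCos_lt (ha : 0 < a) (hab : a ≤ b) (hbc : b < c) (hc : c ≤ π) :
    ∀ᶠ w in 𝓝[<] c, halfGapCos a b c w < halfGapCos a b c c := by
  have hb : b < π := hbc.trans_le hc
  have hcb : cos c < cos b := cos_lt_cos_of_nonneg_of_le_pi (by linarith) hc hbc
  have hba : cos b ≤ cos a := cos_le_cos_of_nonneg_of_le_pi ha.le hb.le hab
  have hs : 0 < sin ((a + b) / 2) := sin_pos_of_pos_of_lt_pi (by linarith) (by linarith)
  simpa using (hasDerivAt_halfGapCos (by linarith) (by linarith)).neg.eventually_nhdsLT_lt_of_neg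
    (neg_neg_of_pos (div_pos (by linarith) (by positivity)))

theorem sin_add_sin_of_cos_eq_halfGapCos {w δ : ℝ} (hδ : cos δ = halfGapCos a b c w)
    (hs : sin ((a + b + c - w) / 2) ≠ 0) :
    sin ((a + b + c - w) / 2 - δ) + sin ((a + b + c - w) / 2 + δ) + sin w =
      sin a + sin b + sin c := by
  rw [sin_sub, sin_add, hδ, halfGapCos]
  field_simp
  ring

theorem sin_half_add_sin_half_eq_curveObjective {w δ : ℝ} (hδ : cos δ = halfGapCos a b c w)
    (hδ₀ : 0 ≤ δ) (hδπ : δ ≤ π) :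
    sin (((a + b + c - w) / 2 - δ) / 2) + sin (((a + b + c - w) / 2 + δ) / 2) + sin (w / 2) =
      curveObjective a b c w := by
  rw [curveObjective, ← hδ, ← cos_half (by linarith) hδπ, sub_div, add_div, sin_sub, sin_add]
  ring_nf

theorem exists_triple_sum_sin_half_gt (ha : 0 < a) (hab : a ≤ b) (hbc : b < c) (hc : c ≤ π) :
    ∃ x y z : ℝ, x ∈ Set.Icc 0 π ∧ y ∈ Set.Icc 0 π ∧ z ∈ Set.Icc 0 π ∧
      x + y + z = a + b + c ∧ sin x + sin y + sin z = sin a + sin b + sin c ∧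
      sin (a / 2) + sin (b / 2) + sin (c / 2) < sin (x / 2) + sin (y / 2) + sin (z / 2) := by
  have hb : b < π := hbc.trans_le hc
  have hgc : halfGapCos a b c c = cos ((b - a) / 2) := by
    rw [halfGapCos_self (by linarith) (by linarith), ← cos_neg]; ring_nf
  set g := halfGapCos a b c
  have hδc : arccos (g c) = (b - a) / 2 := by rw [hgc, arccos_cos (by linarith) (by linarith)]
  have hgcont : ContinuousAt g c :=
    (hasDerivAt_halfGapCos (by linarith) (by linarith)).continuousAt
  have hδcont : ContinuousAt (fun w => arccos (g w)) c :=
    continuous_arccos.continuousAt.comp hgcont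
  have hnear : ∀ᶠ w in 𝓝 c, -1 < g w ∧ 0 < sin ((a + b + c - w) / 2) ∧
      arccos (g w) < (a + b + c - w) / 2 ∧ (a + b + c - w) / 2 + arccos (g w) < π ∧ 0 < w := by
    refine (continuousAt_const.eventually_lt hgcont ?_).and <|
      (continuousAt_const.eventually_lt (by fun_prop) ?_).and <|
      (hδcont.eventually_lt (by fun_prop) ?_).and <|
      ((((continuousAt_const.sub continuousAt_id).div_const 2).add hδcont).eventually_lt
        continuousAt_const ?_).and (eventually_gt_nhds (by linarith))
    · rw [hgc]; linarith [cos_nonneg_of_mem_Icc (x := (b - a) / 2) ⟨by linarith, by linarith⟩]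
    · simp only [add_sub_cancel_right]; exact sin_pos_of_pos_of_lt_pi (by linarith) (by linarith)
    · rw [hδc]; linarith
    · show (a + b + c - c) / 2 + arccos (g c) < π
      rw [hδc]; linarith
  obtain ⟨w, hobj, hgw, ⟨hg₁, hs, hx, hy, hw₀⟩, hwc⟩ :=
    ((eventually_curveObjective_gt ha hab hbc hc).and <|
      (eventually_halfGapCos_lt ha hab hbc hc).and <|
      (hnear.filter_mono nhdsWithin_le_nhds).and self_mem_nhdsWithin).exists
  -- `g c = 1` when `a = b`, so `g w ≤ 1` needs the strict decrease of `g`.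
  have hδ : cos (arccos (g w)) = g w :=
    cos_arccos hg₁.le (hgw.le.trans (hgc.trans_le (cos_le_one _)))
  have hδ₀ : 0 ≤ arccos (g w) := arccos_nonneg _
  refine ⟨_, _, w, ⟨by linarith, by linarith⟩, ⟨by linarith, by linarith⟩,
    ⟨hw₀.le, hwc.le.trans hc⟩, by ring, sin_add_sin_of_cos_eq_halfGapCos hδ hs.ne', ?_⟩
  rw [sin_half_add_sin_half_eq_curveObjective hδ hδ₀ (arccos_le_pi _),
    ← curveObjective_self ha hab hb]
  exact hobj

end Curve

theorem sum_sin_half_le_of_maximizer {n : ℕ} {S T : ℝ} {θ : Fin n → ℝ}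
    (hmax : ∀ φ : Fin n → ℝ, (∀ i, φ i ∈ Set.Icc 0 π) → (∀ i j : Fin n, i ≤ j → φ i ≤ φ j) →
      ∑ i, φ i = S → ∑ i, sin (φ i) = T → ∑ i, sin (φ i / 2) ≤ ∑ i, sin (θ i / 2))
    {ψ : Fin n → ℝ} (hψ : ∀ i, ψ i ∈ Set.Icc 0 π) (hsum : ∑ i, ψ i = S)
    (hsin : ∑ i, sin (ψ i) = T) :
    ∑ i, sin (ψ i / 2) ≤ ∑ i, sin (θ i / 2) := by
  set σ := Tuple.sort ψ
  have hperm (F : ℝ → ℝ) : ∑ i, F (ψ (σ i)) = ∑ i, F (ψ i) := Equiv.sum_comp σ (F ∘ ψ)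
  rw [← hperm fun t => sin (t / 2)]
  exact hmax (ψ ∘ σ) (fun i => hψ (σ i)) (fun i j hij => Tuple.monotone_sort ψ hij)
    ((hperm id).trans hsum) ((hperm sin).trans hsin)

theorem n_angle_maximizer (n : ℕ) (hn : 3 ≤ n) (S T : ℝ)
    (θ : Fin n → ℝ)
    (hrange : ∀ i, θ i ∈ Set.Icc 0 π)
    (hmono : ∀ i j : Fin n, i ≤ j → θ i ≤ θ j)
    (hsum : ∑ i, θ i = S) (hsin : ∑ i, Real.sin (θ i) = T)
    (hmax : ∀ φ : Fin n → ℝ, (∀ i, φ i ∈ Set.Icc 0 π) →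
      (∀ i j : Fin n, i ≤ j → φ i ≤ φ j) →
      ∑ i, φ i = S → ∑ i, Real.sin (φ i) = T →
      ∑ i, Real.sin (φ i / 2) ≤ ∑ i, Real.sin (θ i / 2)) :
    θ ⟨0, by omega⟩ = 0 ∨ ∀ i j : Fin n, 1 ≤ (i : ℕ) → 1 ≤ (j : ℕ) → θ i = θ j := by
  by_contra! ⟨h₀, i, j, hi, hj, hij⟩
  wlog hlt : θ i < θ j generalizing i j
  · exact this j i hj hi hij.symm (hij.lt_or_gt.resolve_left hlt)
  set p : Fin n := ⟨0, by omega⟩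
  obtain ⟨x, y, z, hx, hy, hz, hsum₃, hsin₃, hobj₃⟩ := exists_triple_sum_sin_half_gt
    ((hrange p).1.lt_of_ne (Ne.symm h₀)) (hmono p i (Nat.zero_le _)) hlt (hrange j).2
  have hpi : p ≠ i := fun h => by simp [← h, p] at hi
  have hpj : p ≠ j := fun h => by simp [← h, p] at hj
  have hij' : i ≠ j := fun h => hij (congrArg θ h)
  set ψ := update (update (update θ p x) i y) j z
  have hψ (F : ℝ → ℝ) : ∑ k, F (ψ k) =
      ∑ k, F (θ k) + (F x + F y + F z - (F (θ p) + F (θ i) + F (θ j))) := by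
    simp only [ψ, sum_apply_update, update_of_ne hij'.symm, update_of_ne hpj.symm,
      update_of_ne hpi.symm]
    ring
  have hψ_mem (k : Fin n) : ψ k ∈ Set.Icc 0 π := by
    simp only [ψ, update_apply]
    split_ifs <;> first | assumption | exact hrange k
  have hle := sum_sin_half_le_of_maximizer hmax hψ_mem (by simpa [hsum, hsum₃] using hψ id)
    (by rw [hψ sin, hsin, hsin₃]; ring)
  linarith [hψ fun t => sin (t / 2)]
end

section
/- Given S ∈ (0, 2π] and T ∈ (0, S), there exists a unique integer n ≥ 3 such that (n−1) sin(S/(n−1)) < T ≤ n sin(S/n) (interpreting the lower bound as 2 sin(S/2) for n = 3 when applicable). -/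
/-!
For `x > 0` we have `x * sin (S / x) = S * sinc (S / x)`. Since `sin` is strictly concave on
`[0, π]`, `sinc` is strictly decreasing there, so `x ↦ x * sin (S / x)` is strictly increasing
for `x ≥ S / π`, in particular for `x ≥ 2` when `S ≤ 2π`; and it tends to `S` because `sinc` is
continuous with `sinc 0 = 1`. Hence some `n ≥ 3` has `T ≤ n * sin (S / n)`, the least such `n`
satisfies both inequalities, and monotonicity rules out any other.
-/

open Real Set Filter Topology

namespace Real

theorem strictAntiOn_sinc : StrictAntiOn sinc (Icc 0 π) := by
  intro x hx y hy hxy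
  rcases hx.1.eq_or_lt with rfl | hx0
  · rw [sinc_zero, sinc_of_ne_zero (by linarith)]
    exact (div_lt_one (by linarith)).2 (sin_lt (by linarith))
  · have h0 : (0 : ℝ) ∈ Icc 0 π := ⟨le_rfl, pi_pos.le⟩
    have hslope := strictConcaveOn_sin_Icc.secant_strict_mono h0 hx hy hx0.ne' (by linarith) hxy
    simpa [sinc_of_ne_zero hx0.ne', sinc_of_ne_zero (show y ≠ 0 by linarith)] using hslope

theorem mul_sin_div_eq_mul_sinc (S : ℝ) {x : ℝ} (hx : x ≠ 0) :
    x * sin (S / x) = S * sinc (S / x) := by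
  rcases eq_or_ne S 0 with rfl | hS
  · simp
  · rw [sinc_of_ne_zero (div_ne_zero hS hx)]
    field_simp

theorem strictMonoOn_mul_sin_div {S : ℝ} (hS : 0 < S) :
    StrictMonoOn (fun x => x * sin (S / x)) (Ici (S / π)) := by
  intro x hx y hy hxy
  have hx0 : 0 < x := (div_pos hS pi_pos).trans_le hx
  have hy0 : 0 < y := hx0.trans hxy
  have hxπ : S / x ≤ π := (div_le_comm₀ hx0 pi_pos).2 hx
  have hyx : S / y < S / x := div_lt_div_of_pos_left hS hx0 hxy
  simp only [mul_sin_div_eq_mul_sinc S hx0.ne', mul_sin_div_eq_mul_sinc S hy0.ne']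
  exact mul_lt_mul_of_pos_left
    (strictAntiOn_sinc ⟨(div_pos hS hy0).le, hyx.le.trans hxπ⟩
      ⟨(div_pos hS hx0).le, hxπ⟩ hyx) hS

theorem tendsto_mul_sin_div_atTop (S : ℝ) :
    Tendsto (fun x => x * sin (S / x)) atTop (𝓝 S) := by
  have hdiv : Tendsto (fun x : ℝ => S / x) atTop (𝓝 0) := tendsto_const_nhds.div_atTop tendsto_id
  have hsinc : Tendsto (fun x => sinc (S / x)) atTop (𝓝 1) := by
    have := (continuous_sinc.tendsto 0).comp hdiv
    rwa [sinc_zero] at this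
  have hlim : Tendsto (fun x => S * sinc (S / x)) atTop (𝓝 S) := by
    simpa using hsinc.const_mul S
  refine hlim.congr' ?_
  filter_upwards [eventually_ne_atTop 0] with x hx
  exact (mul_sin_div_eq_mul_sinc S hx).symm

end Real

theorem existsUnique_nat_threshold_of_monotoneOn {α : Type*} [LinearOrder α] {f : ℝ → α}
    {k : ℕ} {T : α} (hf : MonotoneOn f (Ici (k : ℝ))) (hT : ∃ n : ℕ, k ≤ n ∧ T ≤ f n) :
    ∃! n : ℕ, k ≤ n ∧ (n = k ∨ f (n - 1) < T) ∧ T ≤ f n := by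
  classical
  set n := Nat.find hT
  obtain ⟨hkn, hTn⟩ : k ≤ n ∧ T ≤ f n := Nat.find_spec hT
  refine ⟨n, ⟨hkn, ?_, hTn⟩, ?_⟩
  · rcases hkn.eq_or_lt with h | h
    · exact Or.inl h.symm
    · refine Or.inr (lt_of_not_ge fun hle => ?_)
      have hpred : ((n - 1 : ℕ) : ℝ) = n - 1 := by
        rw [Nat.cast_sub (by omega), Nat.cast_one]
      have : n ≤ n - 1 := Nat.find_min' hT ⟨by omega, hpred ▸ hle⟩
      omega
  · rintro m ⟨hkm, hlow, hTm⟩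
    refine le_antisymm (not_lt.1 fun hnm => ?_) (Nat.find_min' hT ⟨hkm, hTm⟩)
    have hle : (n : ℝ) ≤ m - 1 := by
      rw [le_sub_iff_add_le]; exact_mod_cast hnm
    have hk : (k : ℝ) ≤ n := by exact_mod_cast hkn
    exact (hlow.resolve_left (by omega)).not_ge (hTn.trans (hf hk (hk.trans hle) hle))

theorem exists_unique_n (S T : ℝ) (hS : S ∈ Set.Ioc 0 (2 * π)) (hT : T ∈ Set.Ioo 0 S) :
    ∃! n : ℕ, 3 ≤ n ∧ (n = 3 ∨ ((n : ℝ) - 1) * Real.sin (S / (n - 1)) < T) ∧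
      T ≤ n * Real.sin (S / n) := by
  obtain ⟨hS0, hS2π⟩ := hS
  have hmono : MonotoneOn (fun x => x * sin (S / x)) (Ici ((3 : ℕ) : ℝ)) := by
    refine (strictMonoOn_mul_sin_div hS0).monotoneOn.mono (Ici_subset_Ici.2 ?_)
    rw [div_le_iff₀ pi_pos]
    push_cast
    linarith [pi_pos]
  have hex : ∃ n : ℕ, 3 ≤ n ∧ T ≤ n * sin (S / n) :=
    ((eventually_ge_atTop 3).and (((tendsto_mul_sin_div_atTop S).comp
      tendsto_natCast_atTop_atTop).eventually (eventually_gt_nhds hT.2))).exists.imp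
      fun _ h => ⟨h.1, h.2.le⟩
  exact existsUnique_nat_threshold_of_monotoneOn hmono hex
end

section
/- Let v be a point in the open unit disk, and let a, b be two points in the closed unit disk not collinear with v. Consider the chord of the disk through v parallel to the line ab, with endpoints c, d. Then the function w ↦ |w−a| + |w−b| restricted to the segment [c, d] is strictly convex, and hence attains its maximum only at an endpoint c or d. -/
open Real

lemma aux_strict (a c d : EuclideanSpace ℝ (Fin 2)) (hcd : c ≠ d)
    (ha : ∀ r : ℝ, a - c ≠ r • (d - c)) :
    StrictConvexOn ℝ (segment ℝ c d) (fun w => ‖w - a‖) := by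
  refine ⟨convex_segment c d, ?_⟩
  intro x hx y hy hxy s t hs ht hst
  rw [segment_eq_image'] at hx hy
  obtain ⟨p, hp, rfl⟩ := hx
  obtain ⟨q, hq, rfl⟩ := hy
  have hu : d - c ≠ 0 := sub_ne_zero.2 (Ne.symm hcd)
  have hpq : p ≠ q := by
    rintro rfl; exact hxy rfl
  have hxa : c + p • (d - c) - a ≠ 0 := by
    intro h
    exact ha p (by linear_combination (norm := module) -h)
  have hya : c + q • (d - c) - a ≠ 0 := by
    intro h
    exact ha q (by linear_combination (norm := module) -h)
  have hkey' : ∀ r₁ r₂ : ℝ, 0 < r₁ → 0 < r₂ →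
      r₁ • (c + p • (d - c) - a) ≠ r₂ • (c + q • (d - c) - a) := by
    intro r₁ r₂ hr₁ hr₂ hr
    have h2 : (r₁ - r₂) • (a - c) = (r₁ * p - r₂ * q) • (d - c) := by
      linear_combination (norm := module) -hr
    rcases eq_or_ne r₁ r₂ with h3 | h3
    · have h0 : (r₁ * p - r₂ * q) • (d - c) = 0 := by rw [← h2, h3]; simp
      have h4 : r₁ * p - r₂ * q = 0 := by
        by_contra h5
        exact hu (by simpa [h5] using smul_eq_zero.1 h0)
      apply hpq
      have : r₁ * p = r₁ * q := by rw [h3] at h4 ⊢; linarith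
      exact mul_left_cancel₀ (ne_of_gt hr₁) this
    · have h6 : r₁ - r₂ ≠ 0 := sub_ne_zero.2 h3
      apply ha ((r₁ * p - r₂ * q) / (r₁ - r₂))
      rw [div_eq_inv_mul, ← smul_smul, ← h2, smul_smul, inv_mul_cancel₀ h6, one_smul]
  have hkey := norm_add_lt_of_not_sameRay (x := s • (c + p • (d - c) - a))
      (y := t • (c + q • (d - c) - a)) ?_
  · have he : s • (c + p • (d - c)) + t • (c + q • (d - c)) - a
        = s • (c + p • (d - c) - a) + t • (c + q • (d - c) - a) := by
      have h7 : (s + t) • a = a := by rw [hst, one_smul]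
      linear_combination (norm := module) h7
    simp only [he]
    calc ‖s • (c + p • (d - c) - a) + t • (c + q • (d - c) - a)‖
        < ‖s • (c + p • (d - c) - a)‖ + ‖t • (c + q • (d - c) - a)‖ := hkey
      _ = s * ‖c + p • (d - c) - a‖ + t * ‖c + q • (d - c) - a‖ := by
          rw [norm_smul, norm_smul, Real.norm_eq_abs, Real.norm_eq_abs,
            abs_of_pos hs, abs_of_pos ht]
  · intro h
    obtain ⟨r₁, r₂, hr₁, hr₂, hr⟩ := h.exists_pos (smul_ne_zero hs.ne' hxa)
      (smul_ne_zero ht.ne' hya)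
    rw [smul_smul, smul_smul] at hr
    exact hkey' _ _ (mul_pos hr₁ hs) (mul_pos hr₂ ht) hr

theorem strict_convex_on_chord
    (v a b c d : EuclideanSpace ℝ (Fin 2))
    (hv : ‖v‖ < 1) (ha : ‖a‖ ≤ 1) (hb : ‖b‖ ≤ 1)
    (hcol : ¬ Collinear ℝ ({v, a, b} : Set (EuclideanSpace ℝ (Fin 2))))
    (hc : ‖c‖ = 1) (hd : ‖d‖ = 1) (hcd : c ≠ d)
    (hvseg : v ∈ segment ℝ c d)
    (hpar : ∃ t : ℝ, d - c = t • (b - a)) :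
    StrictConvexOn ℝ (segment ℝ c d) (fun w => ‖w - a‖ + ‖w - b‖) ∧
    ∀ w ∈ segment ℝ c d, w ≠ c → w ≠ d →
      ‖w - a‖ + ‖w - b‖ < max (‖c - a‖ + ‖c - b‖) (‖d - a‖ + ‖d - b‖) := by
  obtain ⟨t, ht⟩ := hpar
  have hu : d - c ≠ 0 := sub_ne_zero.2 (Ne.symm hcd)
  have ht0 : t ≠ 0 := by
    rintro rfl; rw [zero_smul] at ht; exact hu ht
  have hba : b - a = t⁻¹ • (d - c) := by
    rw [ht, smul_smul, inv_mul_cancel₀ ht0, one_smul]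
  obtain ⟨θ, hθmem, hθ⟩ : ∃ θ ∈ Set.Icc (0:ℝ) 1, v = c + θ • (d - c) := by
    rw [segment_eq_image'] at hvseg
    obtain ⟨θ, h1, h2⟩ := hvseg
    exact ⟨θ, h1, h2.symm⟩
  have hcola : ∀ r : ℝ, a - c = r • (d - c) → False := by
    intro r hr
    apply hcol
    rw [collinear_iff_exists_forall_eq_smul_vadd]
    refine ⟨c, d - c, ?_⟩
    rintro p (rfl | rfl | rfl)
    · refine ⟨θ, ?_⟩
      rw [vadd_eq_add, hθ]; module
    · refine ⟨r, ?_⟩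
      rw [vadd_eq_add]; linear_combination (norm := module) hr
    · refine ⟨r + t⁻¹, ?_⟩
      rw [vadd_eq_add]; linear_combination (norm := module) hr + hba
  have ha' : ∀ r : ℝ, a - c ≠ r • (d - c) := fun r hr => hcola r hr
  have hb' : ∀ r : ℝ, b - c ≠ r • (d - c) := by
    intro r hr
    apply hcola (r - t⁻¹)
    linear_combination (norm := module) hr - hba
  have hsc : StrictConvexOn ℝ (segment ℝ c d) (fun w => ‖w - a‖ + ‖w - b‖) :=
    (aux_strict a c d hcd ha').add (aux_strict b c d hcd hb')
  refine ⟨hsc, fun w hw hwc hwd => ?_⟩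
  exact hsc.lt_on_openSegment (left_mem_segment ℝ c d) (right_mem_segment ℝ c d) hcd
    (mem_openSegment_of_ne_left_right hwc.symm hwd.symm hw)
end

section
/- Fix S ∈ (0, 2π] and n ≥ 3. The maximal value M(T) of ∑ᵢ sin(θᵢ/2) over the set X_{S,T,n} = {(θᵢ) ∈ [0,π]ⁿ : ∑θᵢ = S, ∑ sin θᵢ = T} is strictly increasing in T on the range where X_{S,T,n} is nonempty. -/
open Real

private lemma jensen_sin_aux {n : ℕ} (hn : 0 < n) (x : Fin n → ℝ)
    (hx : ∀ i, x i ∈ Set.Icc 0 π) :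
    ∑ i, Real.sin (x i) ≤ n * Real.sin ((∑ i, x i) / n) := by
  have hn' : (0:ℝ) < n := by exact_mod_cast hn
  have h := strictConcaveOn_sin_Icc.concaveOn.le_map_sum (t := Finset.univ)
    (w := fun _ : Fin n => (n : ℝ)⁻¹) (p := x) (fun i _ => by positivity)
    (by simp [Finset.sum_const, Finset.card_univ]; field_simp) (fun i _ => hx i)
  simp only [smul_eq_mul, ← Finset.mul_sum] at h
  have h2 := mul_le_mul_of_nonneg_left h hn'.le
  calc ∑ i, Real.sin (x i) = n * ((n:ℝ)⁻¹ * ∑ i, Real.sin (x i)) := by field_simp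
    _ ≤ n * Real.sin ((n:ℝ)⁻¹ * ∑ i, x i) := h2
    _ = n * Real.sin ((∑ i, x i) / n) := by rw [inv_mul_eq_div]

theorem max_value_strict_mono_in_T (n : ℕ) (hn : 3 ≤ n) (S : ℝ)
    (hS : S ∈ Set.Ioc 0 (2 * π)) (T₁ T₂ M₁ M₂ : ℝ) (hT : T₁ < T₂)
    (h₁ : IsGreatest {v : ℝ | ∃ θ : Fin n → ℝ, (∀ i, θ i ∈ Set.Icc 0 π) ∧
      ∑ i, θ i = S ∧ ∑ i, Real.sin (θ i) = T₁ ∧ v = ∑ i, Real.sin (θ i / 2)} M₁)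
    (h₂ : IsGreatest {v : ℝ | ∃ θ : Fin n → ℝ, (∀ i, θ i ∈ Set.Icc 0 π) ∧
      ∑ i, θ i = S ∧ ∑ i, Real.sin (θ i) = T₂ ∧ v = ∑ i, Real.sin (θ i / 2)} M₂) :
    M₁ < M₂ := by
  obtain ⟨hS0, hS2⟩ := hS
  obtain ⟨θ, hθ, hθS, hθT, hM₁⟩ := h₁.1
  obtain ⟨φ, hφ, hφS, hφT, -⟩ := h₂.1
  have hn0 : 0 < n := by omega
  have hn' : (0:ℝ) < n := by exact_mod_cast hn0
  set m : ℝ := S / n with hm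
  have hm0 : 0 < m := by positivity
  have hmπ : m ≤ π := by
    rw [hm, div_le_iff₀ hn']
    have hπ : 0 < π := pi_pos
    have : (3:ℝ) ≤ n := by exact_mod_cast hn
    nlinarith
  have hnm : (n : ℝ) * m = S := by rw [hm]; field_simp
  -- T₂ ≤ n * sin m  (Jensen applied to φ)
  have hT₂le : T₂ ≤ n * Real.sin m := by
    have := jensen_sin_aux hn0 φ hφ
    rwa [hφS, hφT, ← hm] at this
  -- the interpolation path
  set ℓ : ℝ → Fin n → ℝ := fun t i => (1 - t) * θ i + t * m with hℓ
  have hℓmem : ∀ t ∈ Set.Icc (0:ℝ) 1, ∀ i, ℓ t i ∈ Set.Icc 0 π := by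
    rintro t ⟨ht0, ht1⟩ i
    obtain ⟨h0i, hπi⟩ := hθ i
    constructor
    · have : 0 ≤ (1 - t) * θ i := mul_nonneg (by linarith) h0i
      have : 0 ≤ t * m := mul_nonneg ht0 hm0.le
      simp only [hℓ]; nlinarith
    · simp only [hℓ]; nlinarith
  have hℓsum : ∀ t, ∑ i, ℓ t i = S := by
    intro t
    have e : ∑ i, ((1 - t) * θ i + t * m) = (1 - t) * (∑ i, θ i) + (n : ℝ) * (t * m) := by
      rw [Finset.sum_add_distrib, ← Finset.mul_sum, Finset.sum_const, Finset.card_univ,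
        Fintype.card_fin, nsmul_eq_mul]
    simp only [hℓ]
    rw [e, hθS, ← hnm]
    ring
  set f : ℝ → ℝ := fun t => ∑ i, Real.sin (ℓ t i) with hf
  have hf0 : f 0 = T₁ := by simp [hf, hℓ, hθT]
  have hf1 : f 1 = n * Real.sin m := by
    simp [hf, hℓ, Finset.sum_const, Finset.card_univ, nsmul_eq_mul]
  have hfc : ContinuousOn f (Set.Icc 0 1) := by
    apply Continuous.continuousOn
    apply continuous_finset_sum
    intro i _
    fun_prop
  -- IVT
  have hmemIcc : T₂ ∈ Set.Icc (f 0) (f 1) := by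
    rw [hf0, hf1]; exact ⟨hT.le, hT₂le⟩
  obtain ⟨t, htI, hft⟩ := intermediate_value_Icc zero_le_one hfc hmemIcc
  have ht0 : 0 < t := by
    rcases lt_or_eq_of_le htI.1 with h | h
    · exact h
    · exfalso; rw [← h] at hft; rw [hf0] at hft; linarith
  -- half-angle sums
  set H0 : ℝ := ∑ i, Real.sin (θ i / 2) with hH0
  set H1 : ℝ := n * Real.sin (m / 2) with hH1
  -- some coordinate differs from m
  have hne : ∃ i, θ i ≠ m := by
    by_contra hc
    push_neg at hc
    have : T₁ = n * Real.sin m := by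
      rw [← hθT]
      simp [hc, Finset.sum_const, Finset.card_univ, nsmul_eq_mul]
    linarith
  obtain ⟨i₀, hi₀⟩ := hne
  -- strict midpoint inequality along the path
  have key : ∀ s : ℝ, 0 < s → s < 1 → (1 - s) * H0 + s * H1 < ∑ i, Real.sin (ℓ s i / 2) := by
    intro s hs0 hs1
    have hterm : ∀ i, (1 - s) * Real.sin (θ i / 2) + s * Real.sin (m / 2)
        ≤ Real.sin (ℓ s i / 2) := by
      intro i
      obtain ⟨h0i, hπi⟩ := hθ i
      have hx : θ i / 2 ∈ Set.Icc 0 π := ⟨by linarith, by linarith [pi_pos]⟩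
      have hy : m / 2 ∈ Set.Icc 0 π := ⟨by linarith, by linarith [pi_pos]⟩
      have := strictConcaveOn_sin_Icc.concaveOn.2 hx hy (by linarith : (0:ℝ) ≤ 1 - s)
        hs0.le (by ring)
      simp only [smul_eq_mul] at this
      have harg : (1 - s) * (θ i / 2) + s * (m / 2) = ℓ s i / 2 := by simp only [hℓ]; ring
      rwa [harg] at this
    have hstrict : (1 - s) * Real.sin (θ i₀ / 2) + s * Real.sin (m / 2)
        < Real.sin (ℓ s i₀ / 2) := by
      obtain ⟨h0i, hπi⟩ := hθ i₀
      have hx : θ i₀ / 2 ∈ Set.Icc 0 π := ⟨by linarith, by linarith [pi_pos]⟩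
      have hy : m / 2 ∈ Set.Icc 0 π := ⟨by linarith, by linarith [pi_pos]⟩
      have hxy : θ i₀ / 2 ≠ m / 2 := fun h => hi₀ (by linarith [h])
      have := strictConcaveOn_sin_Icc.2 hx hy hxy (by linarith : (0:ℝ) < 1 - s)
        hs0 (by ring)
      simp only [smul_eq_mul] at this
      have harg : (1 - s) * (θ i₀ / 2) + s * (m / 2) = ℓ s i₀ / 2 := by simp only [hℓ]; ring
      rwa [harg] at this
    have hsum : ∑ i, ((1 - s) * Real.sin (θ i / 2) + s * Real.sin (m / 2))
        < ∑ i, Real.sin (ℓ s i / 2) :=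
      Finset.sum_lt_sum (fun i _ => hterm i) ⟨i₀, Finset.mem_univ _, hstrict⟩
    calc (1 - s) * H0 + s * H1
        = ∑ i, ((1 - s) * Real.sin (θ i / 2) + s * Real.sin (m / 2)) := by
          rw [Finset.sum_add_distrib, ← Finset.mul_sum, Finset.sum_const, Finset.card_univ,
            Fintype.card_fin, nsmul_eq_mul, hH0, hH1]; ring
      _ < ∑ i, Real.sin (ℓ s i / 2) := hsum
  -- Jensen bound for half-angle sums along the path
  have jens : ∀ s ∈ Set.Icc (0:ℝ) 1, ∑ i, Real.sin (ℓ s i / 2) ≤ H1 := by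
    intro s hs
    have hmem : ∀ i, ℓ s i / 2 ∈ Set.Icc 0 π := by
      intro i
      obtain ⟨ha, hb⟩ := hℓmem s hs i
      exact ⟨div_nonneg ha (by norm_num), (half_le_self ha).trans hb⟩
    have hsum2 : ∑ i, ℓ s i / 2 = S / 2 := by
      rw [← Finset.sum_div, hℓsum]
    have hdiv : S / 2 / (n : ℝ) = m / 2 := by rw [hm]; ring
    calc ∑ i, Real.sin (ℓ s i / 2)
        ≤ n * Real.sin ((∑ i, ℓ s i / 2) / n) := jensen_sin_aux hn0 _ hmem
      _ = H1 := by rw [hsum2, hdiv, hH1]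
  -- H0 < H1
  have hH01 : H0 < H1 := by
    have k := key (1/2) (by norm_num) (by norm_num)
    have j := jens (1/2) ⟨by norm_num, by norm_num⟩
    linarith
  -- M₂ ≥ the half-angle sum at t
  have hM₂ : ∑ i, Real.sin (ℓ t i / 2) ≤ M₂ :=
    h₂.2 ⟨ℓ t, hℓmem t htI, hℓsum t, hft, rfl⟩
  rcases lt_or_eq_of_le htI.2 with ht1 | ht1
  · have k := key t ht0 ht1
    have : H0 < ∑ i, Real.sin (ℓ t i / 2) := by nlinarith
    rw [hM₁]
    linarith
  · subst ht1
    have : ∑ i, Real.sin (ℓ 1 i / 2) = H1 := by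
      simp [hℓ, hH1, Finset.sum_const, Finset.card_univ, nsmul_eq_mul]
    rw [hM₁]
    linarith
end
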